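/- arXiv:2009.05711 — 4 statements merged into one kernel-verified Lean document; each statement's English description precedes it below -/
import Mathlib

section
/- Doubly robust property with misspecified propensity score: if p̃(X) is any measurable function bounded away from 0 and 1 (possibly ≠ p(X)), then under unconfoundedness, E[ D(Y - m₁(X))/p̃(X) - (1-D)(Y - m₀(X))/(1-p̃(X)) + m₁(X) - m₀(X) | X ] = m₁(X) - m₀(X), provided m₁, m₀ are the true outcome regressions. -/
/-!
Under unconfoundedness the conditional law of `((Y1, Y0), D)` given `X` is almost surely the
product of the conditional laws of `(Y1, Y0)` and of `D`, so `E[f · g | X] = E[f | X] · E[g | X]` for `f = Y1, g = D`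
and for `f = Y0, g = 1 - D`. Hence the residuals `D (Y1 - m₁(X))` and `(1 - D) (Y0 - m₀(X))` have
zero conditional mean given `X`, and multiplying them by the bounded `X`-measurable weights
`1 / p̃(X)` and `1 / (1 - p̃(X))` preserves this, whatever `p̃` is. Since `D ∈ {0, 1}`, the
integrand is exactly these weighted residuals plus `m₁(X) - m₀(X)`.
-/

open MeasureTheory ProbabilityTheory

theorem condExp_mul_of_condIndepFun {Ω : Type*} {m' mΩ : MeasurableSpace Ω}
    [StandardBorelSpace Ω] {hm' : m' ≤ mΩ} {μ : Measure Ω} [IsFiniteMeasure μ]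
    {f g : Ω → ℝ} (hf : Measurable f) (hg : Measurable g)
    (hfi : Integrable f μ) (hgi : Integrable g μ) (hfgi : Integrable (f * g) μ)
    (hfg : CondIndepFun m' hm' f g μ) :
    μ[f * g | m'] =ᵐ[μ] μ[f | m'] * μ[g | m'] := by
  have hprod := (condIndepFun_iff_map_prod_eq_prod_map_map hf hg).mp hfg
  filter_upwards [condExp_ae_eq_integral_condExpKernel hm' hfgi,
    condExp_ae_eq_integral_condExpKernel hm' hfi, condExp_ae_eq_integral_condExpKernel hm' hgi,
    ae_of_ae_trim hm' hprod] with ω hfg_ω hf_ω hg_ω hprod_ω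
  rw [Pi.mul_apply, hfg_ω, hf_ω, hg_ω]
  calc ∫ y, (f * g) y ∂condExpKernel μ m' ω
      = ∫ p, p.1 * p.2 ∂(condExpKernel μ m').map (fun ω ↦ (f ω, g ω)) ω := by
        rw [Kernel.map_apply _ (hf.prodMk hg), integral_map (hf.prodMk hg).aemeasurable
          (by fun_prop)]
        rfl
    _ = (∫ x, x ∂(condExpKernel μ m').map f ω) * ∫ y, y ∂(condExpKernel μ m').map g ω := by
        rw [hprod_ω, Kernel.prod_apply]
        exact integral_prod_mul (fun x ↦ x) (fun y ↦ y)
    _ = (∫ y, f y ∂condExpKernel μ m' ω) * ∫ y, g y ∂condExpKernel μ m' ω := by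
        rw [Kernel.map_apply _ hf, Kernel.map_apply _ hg, integral_map hf.aemeasurable
          (by fun_prop), integral_map hg.aemeasurable (by fun_prop)]

theorem condExp_mul_sub_condExp_eq_zero_of_condIndepFun {Ω : Type*} {m' mΩ : MeasurableSpace Ω}
    [StandardBorelSpace Ω] {hm' : m' ≤ mΩ} {μ : Measure Ω} [IsFiniteMeasure μ]
    {f g : Ω → ℝ} {C : ℝ} (hf : Measurable f) (hg : Measurable g) (hfi : Integrable f μ)
    (hgC : ∀ᵐ ω ∂μ, ‖g ω‖ ≤ C) (hfg : CondIndepFun m' hm' f g μ) :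
    μ[g * (f - μ[f | m']) | m'] =ᵐ[μ] 0 := by
  have hgi : Integrable g μ := .of_bound hg.aestronglyMeasurable C hgC
  have hfgi : Integrable (f * g) μ := hfi.mul_bdd hg.aestronglyMeasurable hgC
  have hcgi : Integrable (μ[f | m'] * g) μ :=
    integrable_condExp.mul_bdd hg.aestronglyMeasurable hgC
  rw [show g * (f - μ[f | m']) = f * g - μ[f | m'] * g by ring]
  filter_upwards [condExp_sub hfgi hcgi m',
    condExp_mul_of_condIndepFun hf hg hfi hgi hfgi hfg,
    condExp_mul_of_stronglyMeasurable_left stronglyMeasurable_condExp hcgi hgi]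
    with ω h_sub h_indep h_pull
  simp only [h_sub, Pi.sub_apply, h_indep, h_pull, Pi.mul_apply, Pi.zero_apply, sub_self]

theorem norm_inv_le_inv_of_le {ε x : ℝ} (hε : 0 < ε) (hx : ε ≤ x) : ‖x⁻¹‖ ≤ ε⁻¹ := by
  rw [norm_inv, Real.norm_eq_abs]
  exact inv_anti₀ hε (hx.trans (le_abs_self x))

section InverseWeighting

variable {Ω E : Type*} [MeasurableSpace Ω] [mE : MeasurableSpace E] {μ : Measure Ω}
  {X : Ω → E} {φ : E → ℝ} {ε : ℝ}

theorem integrable_div_comp_of_le (hX : Measurable X) (hφ : Measurable φ) (hε : 0 < ε)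
    (hφε : ∀ x, ε ≤ φ x) {R : Ω → ℝ} (hR : Integrable R μ) :
    Integrable (fun ω ↦ R ω / φ (X ω)) μ := by
  simp_rw [div_eq_inv_mul]
  exact hR.bdd_mul (hφ.comp hX).inv.aestronglyMeasurable
    (ae_of_all _ fun ω ↦ norm_inv_le_inv_of_le hε (hφε (X ω)))

theorem condExp_div_comp_eq_zero [IsFiniteMeasure μ] (hX : Measurable X) (hφ : Measurable φ)
    (hε : 0 < ε) (hφε : ∀ x, ε ≤ φ x) {R : Ω → ℝ} (hR : Integrable R μ)
    (hR0 : μ[R | mE.comap X] =ᵐ[μ] 0) :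
    μ[fun ω ↦ R ω / φ (X ω) | mE.comap X] =ᵐ[μ] 0 := by
  have hw : StronglyMeasurable[mE.comap X] fun ω ↦ (φ (X ω))⁻¹ :=
    (hφ.comp (comap_measurable X)).inv.stronglyMeasurable
  rw [show (fun ω ↦ R ω / φ (X ω)) = (fun ω ↦ (φ (X ω))⁻¹) * R by
    ext ω; exact div_eq_inv_mul _ _]
  filter_upwards [condExp_stronglyMeasurable_mul_of_bound hX.comap_le hw hR ε⁻¹
    (ae_of_all _ fun ω ↦ norm_inv_le_inv_of_le hε (hφε (X ω))), hR0] with ω h_pull h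
  simp [h_pull, h]

end InverseWeighting

theorem condExp_sub_add_eq_of_condExp_eq_zero {Ω : Type*} {m mΩ : MeasurableSpace Ω}
    {μ : Measure Ω} [IsFiniteMeasure μ] (hm : m ≤ mΩ) {f g h : Ω → ℝ}
    (hfi : Integrable f μ) (hgi : Integrable g μ) (hf0 : μ[f | m] =ᵐ[μ] 0)
    (hg0 : μ[g | m] =ᵐ[μ] 0) (hh : StronglyMeasurable[m] h) (hhi : Integrable h μ) :
    μ[f - g + h | m] =ᵐ[μ] h := by
  filter_upwards [condExp_add (hfi.sub hgi) hhi m, condExp_sub hfi hgi m, hf0, hg0]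
    with ω h_add h_sub hf hg
  rw [h_add, Pi.add_apply, h_sub, Pi.sub_apply, hf, hg, condExp_of_stronglyMeasurable hm hh hhi]
  simp

theorem doubly_robust_misspecified_ps_general
    {Ω E : Type*} [MeasurableSpace Ω] [StandardBorelSpace Ω]
    [mE : MeasurableSpace E]
    (μ : Measure Ω) [IsProbabilityMeasure μ]
    (X : Ω → E) (hX : Measurable X)
    (D Y1 Y0 Y : Ω → ℝ)
    (hD : Measurable D) (hD01 : ∀ ω, D ω = 0 ∨ D ω = 1)
    (hY1m : Measurable Y1) (hY0m : Measurable Y0)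
    (hY1 : Integrable Y1 μ) (hY0 : Integrable Y0 μ)
    (hY : ∀ ω, Y ω = D ω * Y1 ω + (1 - D ω) * Y0 ω)
    (hUnconf : CondIndepFun (MeasurableSpace.comap X mE) hX.comap_le
      (fun ω => (Y1 ω, Y0 ω)) D μ)
    -- misspecified propensity score p̃ : E → ℝ, measurable, bounded away from 0 and 1
    (ptilde : E → ℝ) (hptilde : Measurable ptilde)
    (ε : ℝ) (hε : 0 < ε) (hpb : ∀ x, ε ≤ ptilde x ∧ ptilde x ≤ 1 - ε) :
    μ[fun ω =>
        D ω * (Y ω - (μ[Y1 | MeasurableSpace.comap X mE]) ω) / ptilde (X ω)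
          - (1 - D ω) * (Y ω - (μ[Y0 | MeasurableSpace.comap X mE]) ω) / (1 - ptilde (X ω))
          + (μ[Y1 | MeasurableSpace.comap X mE]) ω - (μ[Y0 | MeasurableSpace.comap X mE]) ω
        | MeasurableSpace.comap X mE]
      =ᵐ[μ] fun ω =>
        (μ[Y1 | MeasurableSpace.comap X mE]) ω - (μ[Y0 | MeasurableSpace.comap X mE]) ω := by
  set m₁ := μ[Y1 | mE.comap X]
  set m₀ := μ[Y0 | mE.comap X]
  have hD1 : ∀ᵐ ω ∂μ, ‖D ω‖ ≤ 1 := ae_of_all _ fun ω ↦ by rcases hD01 ω with h | h <;> simp [h]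
  have hD0 : ∀ᵐ ω ∂μ, ‖(1 - D) ω‖ ≤ 1 :=
    ae_of_all _ fun ω ↦ by rcases hD01 ω with h | h <;> simp [h]
  have hR₁ : Integrable (D * (Y1 - m₁)) μ :=
    (hY1.sub integrable_condExp).bdd_mul hD.aestronglyMeasurable hD1
  have hR₀ : Integrable ((1 - D) * (Y0 - m₀)) μ :=
    (hY0.sub integrable_condExp).bdd_mul (measurable_const.sub hD).aestronglyMeasurable hD0
  have hR₁_zero : μ[D * (Y1 - m₁) | mE.comap X] =ᵐ[μ] 0 :=
    condExp_mul_sub_condExp_eq_zero_of_condIndepFun hY1m hD hY1 hD1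
      (hUnconf.comp measurable_fst measurable_id)
  have hR₀_zero : μ[(1 - D) * (Y0 - m₀) | mE.comap X] =ᵐ[μ] 0 :=
    condExp_mul_sub_condExp_eq_zero_of_condIndepFun hY0m (measurable_const.sub hD) hY0 hD0
      (hUnconf.comp measurable_snd (measurable_const.sub measurable_id))
  have hp₁ : ∀ x, ε ≤ ptilde x := fun x ↦ (hpb x).1
  have hp₀ : ∀ x, ε ≤ 1 - ptilde x := fun x ↦ by linarith [(hpb x).2]
  have hp₀m : Measurable fun x ↦ 1 - ptilde x := measurable_const.sub hptilde
  have hAi := integrable_div_comp_of_le hX hptilde hε hp₁ hR₁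
  have hBi := integrable_div_comp_of_le hX hp₀m hε hp₀ hR₀
  have h_integrand : (fun ω ↦ D ω * (Y ω - m₁ ω) / ptilde (X ω)
        - (1 - D ω) * (Y ω - m₀ ω) / (1 - ptilde (X ω)) + m₁ ω - m₀ ω)
      = (fun ω ↦ (D * (Y1 - m₁)) ω / ptilde (X ω))
        - (fun ω ↦ ((1 - D) * (Y0 - m₀)) ω / (1 - ptilde (X ω))) + (m₁ - m₀) := by
    ext ω
    simp only [Pi.add_apply, Pi.sub_apply, Pi.mul_apply, Pi.one_apply, hY ω]
    rcases hD01 ω with h | h <;> simp [h] <;> ring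
  rw [h_integrand]
  exact condExp_sub_add_eq_of_condExp_eq_zero hX.comap_le hAi hBi
    (condExp_div_comp_eq_zero hX hptilde hε hp₁ hR₁ hR₁_zero)
    (condExp_div_comp_eq_zero hX hp₀m hε hp₀ hR₀ hR₀_zero)
    (stronglyMeasurable_condExp.sub stronglyMeasurable_condExp)
    (integrable_condExp.sub integrable_condExp)

/-- **Doubly robust property with a misspecified propensity score.**
If `p̃(X)` is any measurable function bounded away from 0 and 1 (possibly different from the
true propensity score), then under unconfoundedness,
`E[ D(Y-m₁(X))/p̃(X) - (1-D)(Y-m₀(X))/(1-p̃(X)) + m₁(X) - m₀(X) | X ] = m₁(X) - m₀(X)`,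
provided `m₁(X) = E[Y(1)|X]` and `m₀(X) = E[Y(0)|X]` are the true outcome regressions. -/
theorem doubly_robust_misspecified_ps
    {Ω E : Type*} [MeasurableSpace Ω] [StandardBorelSpace Ω] [Nonempty Ω]
    [mE : MeasurableSpace E]
    (μ : Measure Ω) [IsProbabilityMeasure μ]
    (X : Ω → E) (hX : Measurable X)
    (D Y1 Y0 Y : Ω → ℝ)
    (hD : Measurable D) (hD01 : ∀ ω, D ω = 0 ∨ D ω = 1)
    (hY1m : Measurable Y1) (hY0m : Measurable Y0)
    (hY1 : Integrable Y1 μ) (hY0 : Integrable Y0 μ)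
    (hY : ∀ ω, Y ω = D ω * Y1 ω + (1 - D ω) * Y0 ω)
    (hUnconf : CondIndepFun (MeasurableSpace.comap X mE) hX.comap_le
      (fun ω => (Y1 ω, Y0 ω)) D μ)
    -- misspecified propensity score p̃ : E → ℝ, measurable, bounded away from 0 and 1
    (ptilde : E → ℝ) (hptilde : Measurable ptilde)
    (ε : ℝ) (hε : 0 < ε) (hpb : ∀ x, ε ≤ ptilde x ∧ ptilde x ≤ 1 - ε) :
    μ[fun ω =>
        D ω * (Y ω - (μ[Y1 | MeasurableSpace.comap X mE]) ω) / ptilde (X ω)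
          - (1 - D ω) * (Y ω - (μ[Y0 | MeasurableSpace.comap X mE]) ω) / (1 - ptilde (X ω))
          + (μ[Y1 | MeasurableSpace.comap X mE]) ω - (μ[Y0 | MeasurableSpace.comap X mE]) ω
        | MeasurableSpace.comap X mE]
      =ᵐ[μ] fun ω =>
        (μ[Y1 | MeasurableSpace.comap X mE]) ω - (μ[Y0 | MeasurableSpace.comap X mE]) ω :=
  doubly_robust_misspecified_ps_general (mE := mE) μ X hX D Y1 Y0 Y hD hD01 hY1m hY0m hY1 hY0 hY
    hUnconf ptilde hptilde ε hε hpb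
end

section
/- The conditional bias vanishes if either model is correct: in the setting of the bias formula, if p̃(X)=p(X) almost surely or (m̃₁(X)=m₁(X) and m̃₀(X)=m₀(X)) almost surely, then the conditional expectation of the doubly robust score equals m₁(X)-m₀(X) almost surely. -/
/-!
Given `X`, unconfoundedness makes `D` independent of `Y₁` and of `Y₀`, and the weights `1 / p̃(X)`,
`1 / (1 - p̃(X))` and the regressions `m̃ᵢ(X)` can be pulled out of `E[· | X]`. This gives the bias
formula
`E[Ψ̃ | X] = p (m₁ - m̃₁) / p̃ - (1 - p) (m₀ - m̃₀) / (1 - p̃) + m̃₁ - m̃₀`,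
whose right-hand side equals `m₁ - m₀` as soon as `p̃ = p` or `m̃ᵢ = mᵢ`.
The conditional product formula `E[D Z | X] = E[D | X] E[Z | X]` comes from the regular conditional
probability `condExpKernel`, under which conditionally independent real variables are independent
for almost every `ω`, as their joint law is determined by countably many rational quadrants.
-/

open MeasureTheory ProbabilityTheory Set Filter

namespace MeasureTheory

variable {Ω : Type*} {m mΩ : MeasurableSpace Ω} {μ : Measure Ω} [IsFiniteMeasure μ]

lemma condExp_mul_sub_mul_add_ae_eq (hm : m ≤ mΩ) {a b c U V : Ω → ℝ} {C : ℝ}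
    (ha : StronglyMeasurable[m] a) (hb : StronglyMeasurable[m] b)
    (haC : ∀ᵐ ω ∂μ, ‖a ω‖ ≤ C) (hbC : ∀ᵐ ω ∂μ, ‖b ω‖ ≤ C)
    (hU : Integrable U μ) (hV : Integrable V μ)
    (hc : StronglyMeasurable[m] c) (hci : Integrable c μ) :
    μ[a * U - b * V + c | m] =ᵐ[μ] a * μ[U | m] - b * μ[V | m] + c := by
  have haU : Integrable (a * U) μ := hU.bdd_mul (ha.mono hm).aestronglyMeasurable haC
  have hbV : Integrable (b * V) μ := hV.bdd_mul (hb.mono hm).aestronglyMeasurable hbC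
  calc μ[a * U - b * V + c | m] =ᵐ[μ] μ[a * U | m] - μ[b * V | m] + μ[c | m] :=
        (condExp_add (haU.sub hbV) hci m).trans ((condExp_sub haU hbV m).add EventuallyEq.rfl)
    _ =ᵐ[μ] a * μ[U | m] - b * μ[V | m] + c := by
        rw [condExp_of_stronglyMeasurable hm hc hci]
        exact ((condExp_stronglyMeasurable_mul_of_bound hm ha hU C haC).sub
          (condExp_stronglyMeasurable_mul_of_bound hm hb hV C hbC)).add EventuallyEq.rfl

end MeasureTheory

namespace ProbabilityTheory

variable {Ω : Type*} {m mΩ : MeasurableSpace Ω}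

lemma indepFun_of_measure_inter_preimage_Iio_rat {ν : Measure Ω} [IsZeroOrProbabilityMeasure ν]
    {Z W : Ω → ℝ} (hZ : Measurable Z) (hW : Measurable W)
    (h : ∀ q r : ℚ, ν (Z ⁻¹' Iio (q : ℝ) ∩ W ⁻¹' Iio (r : ℝ))
      = ν (Z ⁻¹' Iio (q : ℝ)) * ν (W ⁻¹' Iio (r : ℝ))) :
    IndepFun Z W ν := by
  have hcomap (f : Ω → ℝ) : MeasurableSpace.comap f inferInstance
      = .generateFrom (preimage f '' ⋃ q : ℚ, {Iio (q : ℝ)}) := by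
    rw [BorelSpace.measurable_eq (α := ℝ), Real.borel_eq_generateFrom_Iio_rat,
      MeasurableSpace.comap_generateFrom]
  refine IndepSets.indep hZ.comap_le hW.comap_le (Real.isPiSystem_Iio_rat.comap Z)
    (Real.isPiSystem_Iio_rat.comap W) (hcomap Z) (hcomap W) ?_
  rw [IndepSets_iff]
  rintro _ _ ⟨_, hs, rfl⟩ ⟨_, ht, rfl⟩
  simp only [mem_iUnion, mem_singleton_iff] at hs ht
  obtain ⟨q, rfl⟩ := hs
  obtain ⟨r, rfl⟩ := ht
  exact h q r

/-- The score `Ψ̃`, for a working propensity score `e` and working regressions `a₁`, `a₀`. -/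
noncomputable def doublyRobustScore (D Y e a₁ a₀ : Ω → ℝ) : Ω → ℝ := fun ω =>
  D ω * (Y ω - a₁ ω) / e ω - (1 - D ω) * (Y ω - a₀ ω) / (1 - e ω) + a₁ ω - a₀ ω

lemma doublyRobustScore_eq {D Y Y₁ Y₀ e a₁ a₀ : Ω → ℝ} (hD : ∀ ω, D ω = 0 ∨ D ω = 1)
    (hY : ∀ ω, Y ω = D ω * Y₁ ω + (1 - D ω) * Y₀ ω) :
    doublyRobustScore D Y e a₁ a₀
      = e⁻¹ * (D * (Y₁ - a₁)) - (1 - e)⁻¹ * ((1 - D) * (Y₀ - a₀)) + (a₁ - a₀) := by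
  funext ω
  rcases hD ω with h | h <;>
    simp only [doublyRobustScore, Pi.add_apply, Pi.sub_apply, Pi.mul_apply, Pi.inv_apply,
      Pi.one_apply, hY, h] <;> ring

variable [StandardBorelSpace Ω] {hm : m ≤ mΩ} {μ : Measure Ω} [IsFiniteMeasure μ]

lemma CondIndepFun.ae_indepFun_condExpKernel {Z W : Ω → ℝ} (hZ : Measurable Z)
    (hW : Measurable W) (h : CondIndepFun m hm Z W μ) :
    ∀ᵐ ω ∂μ, IndepFun Z W (condExpKernel μ m ω) := by
  have hrat : ∀ᵐ ω ∂μ, ∀ q r : ℚ,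
      condExpKernel μ m ω (Z ⁻¹' Iio (q : ℝ) ∩ W ⁻¹' Iio (r : ℝ))
        = condExpKernel μ m ω (Z ⁻¹' Iio (q : ℝ)) * condExpKernel μ m ω (W ⁻¹' Iio (r : ℝ)) := by
    refine ae_of_ae_trim hm ?_
    simp only [ae_all_iff]
    exact fun q r => Kernel.indepFun_iff_measure_inter_preimage_eq_mul.mp h _ _
      measurableSet_Iio measurableSet_Iio
  filter_upwards [hrat] with ω hω
  exact indepFun_of_measure_inter_preimage_Iio_rat hZ hW hω

lemma CondIndepFun.condExp_mul_ae_eq_mul_condExp {Z W : Ω → ℝ} {C : ℝ}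
    (h : CondIndepFun m hm Z W μ) (hZm : Measurable Z) (hWm : Measurable W)
    (hZ : Integrable Z μ) (hWC : ∀ᵐ ω ∂μ, ‖W ω‖ ≤ C) :
    μ[W * Z | m] =ᵐ[μ] μ[W | m] * μ[Z | m] := by
  have hW : Integrable W μ := (integrable_const C).mono' hWm.aestronglyMeasurable hWC
  have hWZ : Integrable (W * Z) μ := hZ.bdd_mul hWm.aestronglyMeasurable hWC
  filter_upwards [h.ae_indepFun_condExpKernel hZm hWm, hZ.condExpKernel_ae, hW.condExpKernel_ae,
    condExp_ae_eq_integral_condExpKernel hm hWZ, condExp_ae_eq_integral_condExpKernel hm hW,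
    condExp_ae_eq_integral_condExpKernel hm hZ] with ω hind hZω hWω hWZω hWω' hZω'
  rw [Pi.mul_apply, hWZω, hWω', hZω']
  exact hind.symm.integral_mul_eq_mul_integral hWω.aestronglyMeasurable hZω.aestronglyMeasurable

lemma CondIndepFun.condExp_mul_sub_ae_eq {Z W g : Ω → ℝ} {C : ℝ}
    (h : CondIndepFun m hm Z W μ) (hZm : Measurable Z) (hWm : Measurable W)
    (hZ : Integrable Z μ) (hWC : ∀ᵐ ω ∂μ, ‖W ω‖ ≤ C)
    (hgm : StronglyMeasurable[m] g) (hg : Integrable g μ) :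
    μ[W * (Z - g) | m] =ᵐ[μ] μ[W | m] * (μ[Z | m] - g) := by
  have hW : Integrable W μ := (integrable_const C).mono' hWm.aestronglyMeasurable hWC
  have hgW : Integrable (g * W) μ := hg.bdd_mul hWm.aestronglyMeasurable hWC |>.congr
    (ae_of_all _ fun ω => mul_comm _ _)
  calc μ[W * (Z - g) | m] = μ[W * Z - g * W | m] := by rw [mul_sub, mul_comm W g]
    _ =ᵐ[μ] μ[W * Z | m] - μ[g * W | m] :=
      condExp_sub (hZ.bdd_mul hWm.aestronglyMeasurable hWC) hgW m
    _ =ᵐ[μ] μ[W | m] * μ[Z | m] - g * μ[W | m] :=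
      (h.condExp_mul_ae_eq_mul_condExp hZm hWm hZ hWC).sub
        (condExp_mul_of_stronglyMeasurable_left hgm hgW hW)
    _ = μ[W | m] * (μ[Z | m] - g) := by ring

lemma condExp_doublyRobustScore_ae_eq {D Y Y₁ Y₀ e a₁ a₀ : Ω → ℝ} {ε : ℝ}
    (hDm : Measurable D) (hD : ∀ ω, D ω = 0 ∨ D ω = 1)
    (hY₁m : Measurable Y₁) (hY₀m : Measurable Y₀) (hY₁ : Integrable Y₁ μ) (hY₀ : Integrable Y₀ μ)
    (hY : ∀ ω, Y ω = D ω * Y₁ ω + (1 - D ω) * Y₀ ω)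
    (hindep : CondIndepFun m hm (fun ω => (Y₁ ω, Y₀ ω)) D μ)
    (hem : Measurable[m] e) (hε : 0 < ε) (he : ∀ ω, ε ≤ e ω ∧ e ω ≤ 1 - ε)
    (ha₁m : Measurable[m] a₁) (ha₀m : Measurable[m] a₀)
    (ha₁ : Integrable a₁ μ) (ha₀ : Integrable a₀ μ) :
    μ[doublyRobustScore D Y e a₁ a₀ | m] =ᵐ[μ]
      e⁻¹ * (μ[D | m] * (μ[Y₁ | m] - a₁)) - (1 - e)⁻¹ * ((1 - μ[D | m]) * (μ[Y₀ | m] - a₀))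
        + (a₁ - a₀) := by
  have hinv_le {t : ℝ} (ht : ε ≤ t) : ‖t⁻¹‖ ≤ ε⁻¹ := by
    rw [norm_inv, Real.norm_of_nonneg (hε.le.trans ht)]
    exact inv_anti₀ hε ht
  have hDb (ω : Ω) : ‖D ω‖ ≤ 1 ∧ ‖1 - D ω‖ ≤ 1 := by rcases hD ω with h | h <;> simp [h]
  have hDi : Integrable D μ :=
    (integrable_const 1).mono' hDm.aestronglyMeasurable (ae_of_all _ fun ω => (hDb ω).1)
  have hcompl : μ[1 - D | m] =ᵐ[μ] 1 - μ[D | m] :=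
    (condExp_sub (integrable_const 1) hDi m).trans (by rw [condExp_const hm]; rfl)
  have h₁ : μ[D * (Y₁ - a₁) | m] =ᵐ[μ] μ[D | m] * (μ[Y₁ | m] - a₁) :=
    (hindep.comp measurable_fst measurable_id).condExp_mul_sub_ae_eq hY₁m hDm hY₁
      (ae_of_all _ fun ω => (hDb ω).1) ha₁m.stronglyMeasurable ha₁
  have h₀ : μ[(1 - D) * (Y₀ - a₀) | m] =ᵐ[μ] μ[1 - D | m] * (μ[Y₀ | m] - a₀) :=
    (hindep.comp measurable_snd (measurable_const.sub measurable_id)).condExp_mul_sub_ae_eq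
      hY₀m (measurable_const.sub hDm) hY₀ (ae_of_all _ fun ω => (hDb ω).2)
      ha₀m.stronglyMeasurable ha₀
  have hlin := condExp_mul_sub_mul_add_ae_eq hm (a := e⁻¹) (b := (1 - e)⁻¹)
    (U := D * (Y₁ - a₁)) (V := (1 - D) * (Y₀ - a₀)) hem.inv.stronglyMeasurable
    (measurable_const.sub hem).inv.stronglyMeasurable
    (ae_of_all _ fun ω => hinv_le (he ω).1)
    (ae_of_all _ fun ω => hinv_le (show ε ≤ 1 - e ω by linarith [he ω]))
    ((hY₁.sub ha₁).bdd_mul hDm.aestronglyMeasurable (ae_of_all _ fun ω => (hDb ω).1))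
    ((hY₀.sub ha₀).bdd_mul (measurable_const.sub hDm).aestronglyMeasurable
      (ae_of_all _ fun ω => (hDb ω).2))
    (ha₁m.sub ha₀m).stronglyMeasurable (ha₁.sub ha₀)
  rw [doublyRobustScore_eq hD hY]
  filter_upwards [hlin, h₁, h₀, hcompl] with ω hl e₁ e₀ ec
  simp only [hl, Pi.add_apply, Pi.sub_apply, Pi.mul_apply, e₁, e₀, ec, Pi.one_apply]

end ProbabilityTheory

theorem doubly_robust_bias_vanishes_general
    {Ω E : Type*} [MeasurableSpace Ω] [StandardBorelSpace Ω]
    [mE : MeasurableSpace E]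
    (μ : Measure Ω) [IsProbabilityMeasure μ]
    (X : Ω → E) (hX : Measurable X)
    (D Y1 Y0 Y : Ω → ℝ)
    (hD : Measurable D) (hD01 : ∀ ω, D ω = 0 ∨ D ω = 1)
    (hY1m : Measurable Y1) (hY0m : Measurable Y0)
    (hY1 : Integrable Y1 μ) (hY0 : Integrable Y0 μ)
    (hY : ∀ ω, Y ω = D ω * Y1 ω + (1 - D ω) * Y0 ω)
    (hUnconf : CondIndepFun (MeasurableSpace.comap X mE) hX.comap_le
      (fun ω => (Y1 ω, Y0 ω)) D μ)
    (pX : Ω → ℝ)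
    (hpX : pX =ᵐ[μ] μ[D | MeasurableSpace.comap X mE])
    (ptilde : E → ℝ) (hptilde : Measurable ptilde)
    (ε : ℝ) (hε : 0 < ε) (hpb : ∀ x, ε ≤ ptilde x ∧ ptilde x ≤ 1 - ε)
    (mtilde1 mtilde0 : E → ℝ)
    (hmt1 : Measurable mtilde1) (hmt0 : Measurable mtilde0)
    (hmt1i : Integrable (fun ω => mtilde1 (X ω)) μ)
    (hmt0i : Integrable (fun ω => mtilde0 (X ω)) μ)
    -- either the propensity score or the outcome regressions are correctly specified
    (hcorrect :
      ((fun ω => ptilde (X ω)) =ᵐ[μ] pX) ∨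
      ((fun ω => mtilde1 (X ω)) =ᵐ[μ] μ[Y1 | MeasurableSpace.comap X mE] ∧
       (fun ω => mtilde0 (X ω)) =ᵐ[μ] μ[Y0 | MeasurableSpace.comap X mE])) :
    μ[fun ω =>
        D ω * (Y ω - mtilde1 (X ω)) / ptilde (X ω)
          - (1 - D ω) * (Y ω - mtilde0 (X ω)) / (1 - ptilde (X ω))
          + mtilde1 (X ω) - mtilde0 (X ω)
      | MeasurableSpace.comap X mE]
      =ᵐ[μ] fun ω =>
        (μ[Y1 | MeasurableSpace.comap X mE]) ω - (μ[Y0 | MeasurableSpace.comap X mE]) ω := by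
  have hXm : Measurable[MeasurableSpace.comap X mE] X := comap_measurable X
  refine (condExp_doublyRobustScore_ae_eq (e := fun ω => ptilde (X ω)) hD hD01 hY1m hY0m hY1 hY0
    hY hUnconf (hptilde.comp hXm) hε (fun ω => hpb (X ω))
    (hmt1.comp hXm) (hmt0.comp hXm) hmt1i hmt0i).trans ?_
  rcases hcorrect with hprop | ⟨hreg1, hreg0⟩
  · filter_upwards [hprop.trans hpX] with ω hp
    obtain ⟨hlo, hhi⟩ := hpb (X ω)
    simp only [Pi.add_apply, Pi.sub_apply, Pi.mul_apply, Pi.inv_apply, Pi.one_apply,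
      Function.comp_apply]
    rw [← hp, inv_mul_cancel_left₀ (hε.trans_le hlo).ne',
      inv_mul_cancel_left₀ (by linarith : 1 - ptilde (X ω) ≠ 0)]
    ring
  · filter_upwards [hreg1, hreg0] with ω h1 h0
    simp only [Pi.add_apply, Pi.sub_apply, Pi.mul_apply, Function.comp_apply, h1, h0]
    ring

/-- **The conditional bias vanishes if either nuisance model is correct.**
In the setting of the bias formula, if `p̃(X) = p(X)` almost surely, or
`m̃₁(X) = m₁(X)` and `m̃₀(X) = m₀(X)` almost surely, then the conditional expectation of the
doubly robust score equals `m₁(X) - m₀(X)` almost surely. -/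
theorem doubly_robust_bias_vanishes
    {Ω E : Type*} [MeasurableSpace Ω] [StandardBorelSpace Ω] [Nonempty Ω]
    [mE : MeasurableSpace E]
    (μ : Measure Ω) [IsProbabilityMeasure μ]
    (X : Ω → E) (hX : Measurable X)
    (D Y1 Y0 Y : Ω → ℝ)
    (hD : Measurable D) (hD01 : ∀ ω, D ω = 0 ∨ D ω = 1)
    (hY1m : Measurable Y1) (hY0m : Measurable Y0)
    (hY1 : Integrable Y1 μ) (hY0 : Integrable Y0 μ)
    (hY : ∀ ω, Y ω = D ω * Y1 ω + (1 - D ω) * Y0 ω)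
    (hUnconf : CondIndepFun (MeasurableSpace.comap X mE) hX.comap_le
      (fun ω => (Y1 ω, Y0 ω)) D μ)
    (pX : Ω → ℝ)
    (hpX : pX =ᵐ[μ] μ[D | MeasurableSpace.comap X mE])
    (ptilde : E → ℝ) (hptilde : Measurable ptilde)
    (ε : ℝ) (hε : 0 < ε) (hpb : ∀ x, ε ≤ ptilde x ∧ ptilde x ≤ 1 - ε)
    (mtilde1 mtilde0 : E → ℝ)
    (hmt1 : Measurable mtilde1) (hmt0 : Measurable mtilde0)
    (hmt1i : Integrable (fun ω => mtilde1 (X ω)) μ)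
    (hmt0i : Integrable (fun ω => mtilde0 (X ω)) μ)
    -- either the propensity score or the outcome regressions are correctly specified
    (hcorrect :
      ((fun ω => ptilde (X ω)) =ᵐ[μ] pX) ∨
      ((fun ω => mtilde1 (X ω)) =ᵐ[μ] μ[Y1 | MeasurableSpace.comap X mE] ∧
       (fun ω => mtilde0 (X ω)) =ᵐ[μ] μ[Y0 | MeasurableSpace.comap X mE])) :
    μ[fun ω =>
        D ω * (Y ω - mtilde1 (X ω)) / ptilde (X ω)
          - (1 - D ω) * (Y ω - mtilde0 (X ω)) / (1 - ptilde (X ω))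
          + mtilde1 (X ω) - mtilde0 (X ω)
      | MeasurableSpace.comap X mE]
      =ᵐ[μ] fun ω =>
        (μ[Y1 | MeasurableSpace.comap X mE]) ω - (μ[Y0 | MeasurableSpace.comap X mE]) ω :=
  doubly_robust_bias_vanishes_general (mE := mE) μ X hX D Y1 Y0 Y hD hD01 hY1m hY0m hY1 hY0 hY
    hUnconf pX hpX ptilde hptilde ε hε hpb mtilde1 mtilde0 hmt1 hmt0 hmt1i hmt0i hcorrect
end

section
/- Variance difference with misspecified propensity score: let Ψ₁ = D(Y-m₁(X))/p(X) - (1-D)(Y-m₀(X))/(1-p(X)) + m₁(X) - m₀(X) and Ψ₂ the same with p(X) replaced by a misspecified p̃(X) ∈ (ε,1-ε). Then, under unconfoundedness and square integrability, E[Ψ₂²|X] - E[Ψ₁²|X] = ((p(X)² - p̃(X)²)/(p̃(X)² p(X)))·Var(Y|X,D=1) + (((1-p(X))² - (1-p̃(X))²)/((1-p̃(X))²(1-p(X))))·Var(Y|X,D=0). -/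
/-!
Write the score with propensity `α` as `Ψ_α = aipwScore D Y m₁ m₀ α = R_α + (m₁ - m₀)`, where
`R_α = ipwResidual D Y m₁ m₀ α` is the inverse-propensity-weighted residual. Since
`E[D (Y - m₁) | X] = 0` and `E[(1 - D) (Y - m₀) | X] = 0`, the residual has conditional mean zero
for every `X`-measurable `α` bounded away from `0` and `1`, so
`E[Ψ_α² | X] = E[R_α² | X] + (m₁ - m₀)²`; and since `D (1 - D) = 0`,
`E[R_α² | X] = p v₁ / α² + (1 - p) v₀ / (1 - α)²`. The theorem is the difference of the cases
`α = p̃(X)` and `α = p(X)`. The integrability this needs comes from conditional Jensen: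
`p m₁ = E[D Y | X]` is square integrable and `p ≥ ε`.
-/

open MeasureTheory ProbabilityTheory Filter

theorem norm_le_one_and_norm_one_sub_le_one {d : ℝ} (hd : d = 0 ∨ d = 1) :
    ‖d‖ ≤ 1 ∧ ‖1 - d‖ ≤ 1 := by
  rcases hd with rfl | rfl <;> norm_num

namespace MeasureTheory

variable {Ω : Type*} {m mΩ : MeasurableSpace Ω} {μ : Measure Ω}

theorem MemLp.bdd_mul {p : ENNReal} {f g : Ω → ℝ} {c : ℝ} (hg : MemLp g p μ)
    (hf : AEStronglyMeasurable f μ) (hfc : ∀ᵐ ω ∂μ, ‖f ω‖ ≤ c) :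
    MemLp (fun ω => f ω * g ω) p μ :=
  hg.mul' (memLp_top_of_bound hf c hfc)

theorem MemLp.mul_add_one_sub_mul {p : ENNReal} {D Y1 Y0 : Ω → ℝ} (hD : AEStronglyMeasurable D μ)
    (hD01 : ∀ ω, D ω = 0 ∨ D ω = 1) (hY1 : MemLp Y1 p μ) (hY0 : MemLp Y0 p μ) :
    MemLp (fun ω => D ω * Y1 ω + (1 - D ω) * Y0 ω) p μ :=
  (hY1.bdd_mul hD (ae_of_all _ fun ω => (norm_le_one_and_norm_one_sub_le_one (hD01 ω)).1)).add
    (hY0.bdd_mul (aestronglyMeasurable_const.sub hD)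
      (ae_of_all _ fun ω => (norm_le_one_and_norm_one_sub_le_one (hD01 ω)).2))

theorem memLp_of_condExp_ae_eq_mul {p : ENNReal} (hp : 1 ≤ p) {f g q : Ω → ℝ} {ε : ℝ}
    (hε : 0 < ε) (hg : MemLp g p μ) (hf : AEStronglyMeasurable f μ) (hq : ∀ᵐ ω ∂μ, ε ≤ q ω)
    (hgf : μ[g | m] =ᵐ[μ] fun ω => q ω * f ω) : MemLp f p μ := by
  refine (hg.condExp (m := m) hp).of_le_mul (c := ε⁻¹) hf ?_
  filter_upwards [hq, hgf] with ω hqω hgfω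
  rw [hgfω, norm_mul, Real.norm_of_nonneg (hε.le.trans hqω), ← div_eq_inv_mul,
    le_div_iff₀ hε, mul_comm]
  exact mul_le_mul_of_nonneg_right hqω (norm_nonneg _)

theorem condExp_one_sub [IsFiniteMeasure μ] (hm : m ≤ mΩ) {f : Ω → ℝ} (hf : Integrable f μ) :
    μ[fun ω => 1 - f ω | m] =ᵐ[μ] fun ω => 1 - μ[f | m] ω := by
  have := condExp_sub (integrable_const (1 : ℝ)) hf m
  rwa [condExp_const hm] at this

theorem condExp_mul_sub_ae_eq_zero [IsFiniteMeasure μ] {W Y f q : Ω → ℝ} {c : ℝ}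
    (hW : AEStronglyMeasurable W μ) (hWc : ∀ᵐ ω ∂μ, ‖W ω‖ ≤ c) (hY : Integrable Y μ)
    (hf : Integrable f μ) (hfm : AEStronglyMeasurable[m] f μ) (hWq : μ[W | m] =ᵐ[μ] q)
    (hWYq : μ[fun ω => W ω * Y ω | m] =ᵐ[μ] fun ω => q ω * f ω) :
    μ[fun ω => W ω * (Y ω - f ω) | m] =ᵐ[μ] 0 := by
  have hWY : Integrable (fun ω => W ω * Y ω) μ := hY.bdd_mul hW hWc
  have hfW : Integrable (f * W) μ := hf.mul_bdd hW hWc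
  have hsplit : (fun ω => W ω * (Y ω - f ω)) = (fun ω => W ω * Y ω) - f * W := by
    ext ω; simp only [Pi.sub_apply, Pi.mul_apply]; ring
  rw [hsplit]
  filter_upwards [condExp_sub hWY hfW m,
    condExp_mul_of_aestronglyMeasurable_left hfm hfW (Integrable.of_bound hW c hWc),
    hWq, hWYq] with ω h hpull hq hYq
  simp only [h, Pi.sub_apply, hpull, Pi.mul_apply, hq, hYq, Pi.zero_apply]
  ring

theorem condExp_add_sq_of_condExp_ae_eq_zero [IsFiniteMeasure μ] (hm : m ≤ mΩ) {A B : Ω → ℝ}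
    (hA : MemLp A 2 μ) (hB : MemLp B 2 μ) (hBm : AEStronglyMeasurable[m] B μ)
    (hA0 : μ[A | m] =ᵐ[μ] 0) :
    μ[fun ω => (A ω + B ω) ^ 2 | m] =ᵐ[μ] fun ω => μ[fun ω => A ω ^ 2 | m] ω + B ω ^ 2 := by
  have hA2 : Integrable (fun ω => A ω ^ 2) μ := hA.integrable_sq
  have hB2 : Integrable (fun ω => B ω ^ 2) μ := hB.integrable_sq
  have hBA : Integrable (B * A) μ := (hA.mul hB (r := 1)).integrable le_rfl
  have hexpand : (fun ω => (A ω + B ω) ^ 2)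
      = (fun ω => A ω ^ 2) + (2 : ℝ) • (B * A) + fun ω => B ω ^ 2 := by
    ext ω; simp only [Pi.add_apply, Pi.smul_apply, Pi.mul_apply, smul_eq_mul]; ring
  have hB2m : AEStronglyMeasurable[m] (fun ω => B ω ^ 2) μ := hBm.pow 2
  rw [hexpand]
  filter_upwards [condExp_add (hA2.add (hBA.smul (2 : ℝ))) hB2 m,
    condExp_add hA2 (hBA.smul (2 : ℝ)) m, condExp_smul (2 : ℝ) (B * A) m,
    condExp_mul_of_aestronglyMeasurable_left hBm hBA (hA.integrable one_le_two), hA0,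
    condExp_of_aestronglyMeasurable' hm hB2m hB2] with ω h1 h2 h3 h4 h5 h6
  simp [h1, h2, h3, h4, h5, h6]

theorem ae_norm_inv_le {a : Ω → ℝ} {ε : ℝ} (hε : 0 < ε) (ha : ∀ᵐ ω ∂μ, ε ≤ a ω) :
    ∀ᵐ ω ∂μ, ‖(a ω)⁻¹‖ ≤ ε⁻¹ := by
  filter_upwards [ha] with ω hω
  rw [norm_inv, Real.norm_of_nonneg (hε.le.trans hω)]
  exact inv_anti₀ hε hω

end MeasureTheory

theorem ipw_second_moment_sub {p a v1 v0 d : ℝ} (hp0 : 0 < p) (hp1 : p < 1) (ha0 : 0 < a)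
    (ha1 : a < 1) :
    p * v1 / a ^ 2 + (1 - p) * v0 / (1 - a) ^ 2 + d
        - (p * v1 / p ^ 2 + (1 - p) * v0 / (1 - p) ^ 2 + d)
      = (p ^ 2 - a ^ 2) / (a ^ 2 * p) * v1
        + ((1 - p) ^ 2 - (1 - a) ^ 2) / ((1 - a) ^ 2 * (1 - p)) * v0 := by
  have : 1 - p ≠ 0 := by linarith
  have : 1 - a ≠ 0 := by linarith
  field_simp
  ring

section AIPW

variable {Ω : Type*} {m mΩ : MeasurableSpace Ω} {μ : Measure Ω}

noncomputable def ipwResidual (D Y m1 m0 α : Ω → ℝ) (ω : Ω) : ℝ :=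
  D ω * (Y ω - m1 ω) / α ω - (1 - D ω) * (Y ω - m0 ω) / (1 - α ω)

noncomputable def aipwScore (D Y m1 m0 α : Ω → ℝ) (ω : Ω) : ℝ :=
  ipwResidual D Y m1 m0 α ω + m1 ω - m0 ω

variable {D Y m1 m0 α : Ω → ℝ}

theorem ipwResidual_eq_inv_mul : ipwResidual D Y m1 m0 α =
    (fun ω => (α ω)⁻¹ * (D ω * (Y ω - m1 ω))) -
      fun ω => (1 - α ω)⁻¹ * ((1 - D ω) * (Y ω - m0 ω)) := by
  ext ω; simp only [ipwResidual, Pi.sub_apply, div_eq_inv_mul]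

theorem ipwResidual_sq (hD01 : ∀ ω, D ω = 0 ∨ D ω = 1) (ω : Ω) :
    ipwResidual D Y m1 m0 α ω ^ 2 = (α ω)⁻¹ ^ 2 * (D ω * (Y ω - m1 ω) ^ 2)
      + (1 - α ω)⁻¹ ^ 2 * ((1 - D ω) * (Y ω - m0 ω) ^ 2) := by
  rcases hD01 ω with h | h <;> simp only [ipwResidual, h] <;> ring

variable {ε : ℝ}

theorem memLp_ipwResidual (hD : AEStronglyMeasurable D μ) (hD01 : ∀ ω, D ω = 0 ∨ D ω = 1)
    (hY : MemLp Y 2 μ) (hm1 : MemLp m1 2 μ) (hm0 : MemLp m0 2 μ) (hα : AEStronglyMeasurable α μ)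
    (hε : 0 < ε) (hα0 : ∀ᵐ ω ∂μ, ε ≤ α ω) (hα1 : ∀ᵐ ω ∂μ, ε ≤ 1 - α ω) :
    MemLp (ipwResidual D Y m1 m0 α) 2 μ := by
  have hDb := fun ω => norm_le_one_and_norm_one_sub_le_one (hD01 ω)
  have hT : MemLp (fun ω => D ω * (Y ω - m1 ω)) 2 μ :=
    (hY.sub hm1).bdd_mul hD (ae_of_all _ fun ω => (hDb ω).1)
  have hC : MemLp (fun ω => (1 - D ω) * (Y ω - m0 ω)) 2 μ :=
    (hY.sub hm0).bdd_mul (aestronglyMeasurable_const.sub hD) (ae_of_all _ fun ω => (hDb ω).2)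
  rw [ipwResidual_eq_inv_mul]
  exact (hT.bdd_mul hα.aemeasurable.inv.aestronglyMeasurable (ae_norm_inv_le hε hα0)).sub
    (hC.bdd_mul (aestronglyMeasurable_const.sub hα).aemeasurable.inv.aestronglyMeasurable
      (ae_norm_inv_le hε hα1))

variable [IsFiniteMeasure μ] {p v1 v0 : Ω → ℝ}

theorem condExp_ipwResidual_ae_eq_zero (hm : m ≤ mΩ) (hD : AEStronglyMeasurable D μ)
    (hD01 : ∀ ω, D ω = 0 ∨ D ω = 1) (hY : MemLp Y 2 μ) (hm1 : MemLp m1 2 μ) (hm0 : MemLp m0 2 μ)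
    (hm1m : AEStronglyMeasurable[m] m1 μ) (hm0m : AEStronglyMeasurable[m] m0 μ)
    (hα : AEStronglyMeasurable[m] α μ) (hε : 0 < ε) (hα0 : ∀ᵐ ω ∂μ, ε ≤ α ω)
    (hα1 : ∀ᵐ ω ∂μ, ε ≤ 1 - α ω) (hp : μ[D | m] =ᵐ[μ] p)
    (hm1c : μ[fun ω => D ω * Y ω | m] =ᵐ[μ] fun ω => p ω * m1 ω)
    (hm0c : μ[fun ω => (1 - D ω) * Y ω | m] =ᵐ[μ] fun ω => (1 - p ω) * m0 ω) :
    μ[ipwResidual D Y m1 m0 α | m] =ᵐ[μ] 0 := by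
  have hDb := fun ω => norm_le_one_and_norm_one_sub_le_one (hD01 ω)
  have hD' : AEStronglyMeasurable (fun ω => 1 - D ω) μ := aestronglyMeasurable_const.sub hD
  have hDc : ∀ᵐ ω ∂μ, ‖D ω‖ ≤ 1 := ae_of_all _ fun ω => (hDb ω).1
  have hD'c : ∀ᵐ ω ∂μ, ‖1 - D ω‖ ≤ 1 := ae_of_all _ fun ω => (hDb ω).2
  have hYi := hY.integrable one_le_two
  have hT0 : μ[fun ω => D ω * (Y ω - m1 ω) | m] =ᵐ[μ] 0 :=
    condExp_mul_sub_ae_eq_zero hD hDc hYi (hm1.integrable one_le_two) hm1m hp hm1c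
  have hC0 : μ[fun ω => (1 - D ω) * (Y ω - m0 ω) | m] =ᵐ[μ] 0 :=
    condExp_mul_sub_ae_eq_zero hD' hD'c hYi (hm0.integrable one_le_two) hm0m
      ((condExp_one_sub hm (Integrable.of_bound hD 1 hDc)).trans (hp.fun_comp (1 - ·))) hm0c
  have hTi : Integrable (fun ω => D ω * (Y ω - m1 ω)) μ :=
    (hYi.sub (hm1.integrable one_le_two)).bdd_mul hD hDc
  have hCi : Integrable (fun ω => (1 - D ω) * (Y ω - m0 ω)) μ :=
    (hYi.sub (hm0.integrable one_le_two)).bdd_mul hD' hD'c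
  have hαi : AEStronglyMeasurable[m] (fun ω => (α ω)⁻¹) μ := by fun_prop
  have hα'i : AEStronglyMeasurable[m] (fun ω => (1 - α ω)⁻¹) μ := by fun_prop
  rw [ipwResidual_eq_inv_mul]
  filter_upwards [condExp_sub (hTi.bdd_mul (hαi.mono hm) (ae_norm_inv_le hε hα0))
      (hCi.bdd_mul (hα'i.mono hm) (ae_norm_inv_le hε hα1)) m,
    condExp_stronglyMeasurable_mul_of_bound₀ hm hαi hTi _ (ae_norm_inv_le hε hα0),
    condExp_stronglyMeasurable_mul_of_bound₀ hm hα'i hCi _ (ae_norm_inv_le hε hα1),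
    hT0, hC0] with ω h hT hC hT0ω hC0ω
  simp only [Pi.mul_def] at hT hC
  simp [h, hT, hC, hT0ω, hC0ω]

theorem condExp_ipwResidual_sq (hm : m ≤ mΩ) (hD : AEStronglyMeasurable D μ)
    (hD01 : ∀ ω, D ω = 0 ∨ D ω = 1) (hY : MemLp Y 2 μ) (hm1 : MemLp m1 2 μ) (hm0 : MemLp m0 2 μ)
    (hα : AEStronglyMeasurable[m] α μ) (hε : 0 < ε) (hα0 : ∀ᵐ ω ∂μ, ε ≤ α ω)
    (hα1 : ∀ᵐ ω ∂μ, ε ≤ 1 - α ω)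
    (hv1c : μ[fun ω => D ω * (Y ω - m1 ω) ^ 2 | m] =ᵐ[μ] fun ω => p ω * v1 ω)
    (hv0c : μ[fun ω => (1 - D ω) * (Y ω - m0 ω) ^ 2 | m] =ᵐ[μ] fun ω => (1 - p ω) * v0 ω) :
    μ[fun ω => ipwResidual D Y m1 m0 α ω ^ 2 | m] =ᵐ[μ]
      fun ω => p ω * v1 ω / α ω ^ 2 + (1 - p ω) * v0 ω / (1 - α ω) ^ 2 := by
  have hDb := fun ω => norm_le_one_and_norm_one_sub_le_one (hD01 ω)
  have hTi : Integrable (fun ω => D ω * (Y ω - m1 ω) ^ 2) μ :=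
    (hY.sub hm1).integrable_sq.bdd_mul hD (ae_of_all _ fun ω => (hDb ω).1)
  have hCi : Integrable (fun ω => (1 - D ω) * (Y ω - m0 ω) ^ 2) μ :=
    (hY.sub hm0).integrable_sq.bdd_mul (aestronglyMeasurable_const.sub hD)
      (ae_of_all _ fun ω => (hDb ω).2)
  have hw1 : AEStronglyMeasurable[m] (fun ω => (α ω)⁻¹ ^ 2) μ := by fun_prop
  have hw0 : AEStronglyMeasurable[m] (fun ω => (1 - α ω)⁻¹ ^ 2) μ := by fun_prop
  have hw1b : ∀ᵐ ω ∂μ, ‖(α ω)⁻¹ ^ 2‖ ≤ ε⁻¹ ^ 2 := by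
    filter_upwards [ae_norm_inv_le hε hα0] with ω h
    rw [norm_pow]; exact pow_le_pow_left₀ (norm_nonneg _) h 2
  have hw0b : ∀ᵐ ω ∂μ, ‖(1 - α ω)⁻¹ ^ 2‖ ≤ ε⁻¹ ^ 2 := by
    filter_upwards [ae_norm_inv_le hε hα1] with ω h
    rw [norm_pow]; exact pow_le_pow_left₀ (norm_nonneg _) h 2
  rw [show (fun ω => ipwResidual D Y m1 m0 α ω ^ 2) = _ from funext (ipwResidual_sq hD01)]
  filter_upwards [condExp_add (hTi.bdd_mul (hw1.mono hm) hw1b) (hCi.bdd_mul (hw0.mono hm) hw0b) m,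
    condExp_stronglyMeasurable_mul_of_bound₀ hm hw1 hTi _ hw1b,
    condExp_stronglyMeasurable_mul_of_bound₀ hm hw0 hCi _ hw0b, hv1c, hv0c] with ω h hT hC hT' hC'
  simp only [Pi.add_def, Pi.mul_def] at h hT hC
  rw [h, hT, hC, hT', hC', div_eq_mul_inv, div_eq_mul_inv, inv_pow, inv_pow]
  ring

theorem condExp_aipwScore_sq (hm : m ≤ mΩ) (hD : AEStronglyMeasurable D μ)
    (hD01 : ∀ ω, D ω = 0 ∨ D ω = 1) (hY : MemLp Y 2 μ) (hm1 : MemLp m1 2 μ) (hm0 : MemLp m0 2 μ)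
    (hm1m : AEStronglyMeasurable[m] m1 μ) (hm0m : AEStronglyMeasurable[m] m0 μ)
    (hα : AEStronglyMeasurable[m] α μ) (hε : 0 < ε)
    (hαb : ∀ᵐ ω ∂μ, ε ≤ α ω ∧ α ω ≤ 1 - ε) (hp : μ[D | m] =ᵐ[μ] p)
    (hm1c : μ[fun ω => D ω * Y ω | m] =ᵐ[μ] fun ω => p ω * m1 ω)
    (hm0c : μ[fun ω => (1 - D ω) * Y ω | m] =ᵐ[μ] fun ω => (1 - p ω) * m0 ω)
    (hv1c : μ[fun ω => D ω * (Y ω - m1 ω) ^ 2 | m] =ᵐ[μ] fun ω => p ω * v1 ω)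
    (hv0c : μ[fun ω => (1 - D ω) * (Y ω - m0 ω) ^ 2 | m] =ᵐ[μ] fun ω => (1 - p ω) * v0 ω) :
    μ[fun ω => aipwScore D Y m1 m0 α ω ^ 2 | m] =ᵐ[μ] fun ω =>
      p ω * v1 ω / α ω ^ 2 + (1 - p ω) * v0 ω / (1 - α ω) ^ 2 + (m1 ω - m0 ω) ^ 2 := by
  have hsplit : (fun ω => aipwScore D Y m1 m0 α ω ^ 2)
      = fun ω => (ipwResidual D Y m1 m0 α ω + (m1 ω - m0 ω)) ^ 2 := by
    simp only [aipwScore, add_sub_assoc]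
  have hα0 : ∀ᵐ ω ∂μ, ε ≤ α ω := hαb.mono fun ω h => h.1
  have hα1 : ∀ᵐ ω ∂μ, ε ≤ 1 - α ω := hαb.mono fun ω h => by linarith [h.2]
  rw [hsplit]
  filter_upwards [condExp_add_sq_of_condExp_ae_eq_zero (B := fun ω => m1 ω - m0 ω) hm
      (memLp_ipwResidual hD hD01 hY hm1 hm0 (hα.mono hm) hε hα0 hα1) (hm1.sub hm0) (hm1m.sub hm0m)
      (condExp_ipwResidual_ae_eq_zero hm hD hD01 hY hm1 hm0 hm1m hm0m hα hε hα0 hα1 hp hm1c hm0c),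
    condExp_ipwResidual_sq hm hD hD01 hY hm1 hm0 hα hε hα0 hα1 hv1c hv0c] with ω h h'
  rw [h, h']

end AIPW

theorem variance_difference_misspecified_ps_general
    {Ω E : Type*} [MeasurableSpace Ω]
    [mE : MeasurableSpace E]
    (μ : Measure Ω) [IsProbabilityMeasure μ]
    (X : Ω → E) (hX : Measurable X)
    (D Y1 Y0 Y : Ω → ℝ)
    (hD : Measurable D) (hD01 : ∀ ω, D ω = 0 ∨ D ω = 1)
    (hY1 : MemLp Y1 2 μ) (hY0 : MemLp Y0 2 μ)
    (hY : ∀ ω, Y ω = D ω * Y1 ω + (1 - D ω) * Y0 ω)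
    -- true propensity score and misspecified propensity score, both in (ε, 1-ε)
    (pX : Ω → ℝ)
    (hpX : pX =ᵐ[μ] μ[D | MeasurableSpace.comap X mE])
    (ptilde : E → ℝ) (hptilde : Measurable ptilde)
    (ε : ℝ) (hε : 0 < ε)
    (hpb : ∀ ω, ε ≤ pX ω ∧ pX ω ≤ 1 - ε)
    (hpb' : ∀ x, ε ≤ ptilde x ∧ ptilde x ≤ 1 - ε)
    -- conditional means m₁(X) = E[Y|X,D=1], m₀(X) = E[Y|X,D=0]
    (m1 m0 v1 v0 : Ω → ℝ)
    (hm1meas : StronglyMeasurable[MeasurableSpace.comap X mE] m1)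
    (hm0meas : StronglyMeasurable[MeasurableSpace.comap X mE] m0)
    (hm1 : μ[fun ω => D ω * Y ω | MeasurableSpace.comap X mE]
      =ᵐ[μ] fun ω => pX ω * m1 ω)
    (hm0 : μ[fun ω => (1 - D ω) * Y ω | MeasurableSpace.comap X mE]
      =ᵐ[μ] fun ω => (1 - pX ω) * m0 ω)
    -- conditional variances v₁ = Var(Y|X,D=1), v₀ = Var(Y|X,D=0)
    (hv1 : μ[fun ω => D ω * (Y ω - m1 ω) ^ 2 | MeasurableSpace.comap X mE]
      =ᵐ[μ] fun ω => pX ω * v1 ω)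
    (hv0 : μ[fun ω => (1 - D ω) * (Y ω - m0 ω) ^ 2 | MeasurableSpace.comap X mE]
      =ᵐ[μ] fun ω => (1 - pX ω) * v0 ω) :
    (fun ω =>
        (μ[fun ω' => (D ω' * (Y ω' - m1 ω') / ptilde (X ω')
              - (1 - D ω') * (Y ω' - m0 ω') / (1 - ptilde (X ω'))
              + m1 ω' - m0 ω') ^ 2 | MeasurableSpace.comap X mE]) ω
        - (μ[fun ω' => (D ω' * (Y ω' - m1 ω') / pX ω'
              - (1 - D ω') * (Y ω' - m0 ω') / (1 - pX ω')
              + m1 ω' - m0 ω') ^ 2 | MeasurableSpace.comap X mE]) ω)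
      =ᵐ[μ] fun ω =>
        ((pX ω ^ 2 - ptilde (X ω) ^ 2) / (ptilde (X ω) ^ 2 * pX ω)) * v1 ω
          + (((1 - pX ω) ^ 2 - (1 - ptilde (X ω)) ^ 2)
              / ((1 - ptilde (X ω)) ^ 2 * (1 - pX ω))) * v0 ω := by
  have hle := hX.comap_le
  have hDb := fun ω => norm_le_one_and_norm_one_sub_le_one (hD01 ω)
  have hY2 : MemLp Y 2 μ := by
    rw [show Y = _ from funext hY]
    exact hY1.mul_add_one_sub_mul hD.aestronglyMeasurable hD01 hY0
  have hm1L2 : MemLp m1 2 μ := memLp_of_condExp_ae_eq_mul one_le_two hε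
    (hY2.bdd_mul hD.aestronglyMeasurable (ae_of_all _ fun ω => (hDb ω).1))
    (hm1meas.mono hle).aestronglyMeasurable (ae_of_all _ fun ω => (hpb ω).1) hm1
  have hm0L2 : MemLp m0 2 μ := memLp_of_condExp_ae_eq_mul one_le_two hε
    (hY2.bdd_mul (aestronglyMeasurable_const.sub hD.aestronglyMeasurable)
      (ae_of_all _ fun ω => (hDb ω).2))
    (hm0meas.mono hle).aestronglyMeasurable (ae_of_all _ fun ω => by linarith [(hpb ω).2]) hm0
  have hpXm : AEStronglyMeasurable[MeasurableSpace.comap X mE] pX μ :=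
    stronglyMeasurable_condExp.aestronglyMeasurable.congr hpX.symm
  have hpt : AEStronglyMeasurable[MeasurableSpace.comap X mE] (fun ω => ptilde (X ω)) μ :=
    (hptilde.comp (comap_measurable X)).aestronglyMeasurable
  filter_upwards [condExp_aipwScore_sq hle hD.aestronglyMeasurable hD01 hY2 hm1L2 hm0L2
      hm1meas.aestronglyMeasurable hm0meas.aestronglyMeasurable hpt hε
      (ae_of_all _ fun ω => hpb' (X ω)) hpX.symm hm1 hm0 hv1 hv0,
    condExp_aipwScore_sq hle hD.aestronglyMeasurable hD01 hY2 hm1L2 hm0L2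
      hm1meas.aestronglyMeasurable hm0meas.aestronglyMeasurable hpXm hε
      (ae_of_all _ hpb) hpX.symm hm1 hm0 hv1 hv0] with ω hmis htrue
  simp only [aipwScore, ipwResidual] at hmis htrue
  rw [hmis, htrue]
  obtain ⟨hp0, hp1⟩ := hpb ω
  obtain ⟨ht0, ht1⟩ := hpb' (X ω)
  exact ipw_second_moment_sub (by linarith) (by linarith) (by linarith) (by linarith)

/-- **Variance difference with a misspecified propensity score.**
Let `Ψ₁ = D(Y-m₁(X))/p(X) - (1-D)(Y-m₀(X))/(1-p(X)) + m₁(X) - m₀(X)` and `Ψ₂` the same with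
`p(X)` replaced by a misspecified `p̃(X) ∈ (ε, 1-ε)`.  Then, under unconfoundedness and square
integrability,
`E[Ψ₂²|X] - E[Ψ₁²|X] = ((p(X)² - p̃(X)²)/(p̃(X)² p(X)))·Var(Y|X,D=1)
  + (((1-p(X))² - (1-p̃(X))²)/((1-p̃(X))²(1-p(X))))·Var(Y|X,D=0)`.
Here `m₁, m₀, v₁, v₀` (the conditional means and variances of `Y` given `X` on `D=1`, `D=0`)
are characterized by the conditional moment identities
`E[D·Y|X] = p(X)·m₁(X)`, `E[(1-D)·Y|X] = (1-p(X))·m₀(X)`,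
`E[D·(Y-m₁(X))²|X] = p(X)·v₁(X)`, `E[(1-D)·(Y-m₀(X))²|X] = (1-p(X))·v₀(X)`. -/
theorem variance_difference_misspecified_ps
    {Ω E : Type*} [MeasurableSpace Ω] [StandardBorelSpace Ω] [Nonempty Ω]
    [mE : MeasurableSpace E]
    (μ : Measure Ω) [IsProbabilityMeasure μ]
    (X : Ω → E) (hX : Measurable X)
    (D Y1 Y0 Y : Ω → ℝ)
    (hD : Measurable D) (hD01 : ∀ ω, D ω = 0 ∨ D ω = 1)
    (hY1m : Measurable Y1) (hY0m : Measurable Y0)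
    (hY1 : MemLp Y1 2 μ) (hY0 : MemLp Y0 2 μ)
    (hY : ∀ ω, Y ω = D ω * Y1 ω + (1 - D ω) * Y0 ω)
    (hUnconf : CondIndepFun (MeasurableSpace.comap X mE) hX.comap_le
      (fun ω => (Y1 ω, Y0 ω)) D μ)
    -- true propensity score and misspecified propensity score, both in (ε, 1-ε)
    (pX : Ω → ℝ)
    (hpX : pX =ᵐ[μ] μ[D | MeasurableSpace.comap X mE])
    (ptilde : E → ℝ) (hptilde : Measurable ptilde)
    (ε : ℝ) (hε : 0 < ε)
    (hpb : ∀ ω, ε ≤ pX ω ∧ pX ω ≤ 1 - ε)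
    (hpb' : ∀ x, ε ≤ ptilde x ∧ ptilde x ≤ 1 - ε)
    -- conditional means m₁(X) = E[Y|X,D=1], m₀(X) = E[Y|X,D=0]
    (m1 m0 v1 v0 : Ω → ℝ)
    (hm1meas : StronglyMeasurable[MeasurableSpace.comap X mE] m1)
    (hm0meas : StronglyMeasurable[MeasurableSpace.comap X mE] m0)
    (hv1meas : StronglyMeasurable[MeasurableSpace.comap X mE] v1)
    (hv0meas : StronglyMeasurable[MeasurableSpace.comap X mE] v0)
    (hm1 : μ[fun ω => D ω * Y ω | MeasurableSpace.comap X mE]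
      =ᵐ[μ] fun ω => pX ω * m1 ω)
    (hm0 : μ[fun ω => (1 - D ω) * Y ω | MeasurableSpace.comap X mE]
      =ᵐ[μ] fun ω => (1 - pX ω) * m0 ω)
    -- conditional variances v₁ = Var(Y|X,D=1), v₀ = Var(Y|X,D=0)
    (hv1 : μ[fun ω => D ω * (Y ω - m1 ω) ^ 2 | MeasurableSpace.comap X mE]
      =ᵐ[μ] fun ω => pX ω * v1 ω)
    (hv0 : μ[fun ω => (1 - D ω) * (Y ω - m0 ω) ^ 2 | MeasurableSpace.comap X mE]
      =ᵐ[μ] fun ω => (1 - pX ω) * v0 ω) :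
    (fun ω =>
        (μ[fun ω' => (D ω' * (Y ω' - m1 ω') / ptilde (X ω')
              - (1 - D ω') * (Y ω' - m0 ω') / (1 - ptilde (X ω'))
              + m1 ω' - m0 ω') ^ 2 | MeasurableSpace.comap X mE]) ω
        - (μ[fun ω' => (D ω' * (Y ω' - m1 ω') / pX ω'
              - (1 - D ω') * (Y ω' - m0 ω') / (1 - pX ω')
              + m1 ω' - m0 ω') ^ 2 | MeasurableSpace.comap X mE]) ω)
      =ᵐ[μ] fun ω =>
        ((pX ω ^ 2 - ptilde (X ω) ^ 2) / (ptilde (X ω) ^ 2 * pX ω)) * v1 ω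
          + (((1 - pX ω) ^ 2 - (1 - ptilde (X ω)) ^ 2)
              / ((1 - ptilde (X ω)) ^ 2 * (1 - pX ω))) * v0 ω :=
  variance_difference_misspecified_ps_general (mE := mE) μ X hX D Y1 Y0 Y hD hD01 hY1 hY0 hY pX hpX
    ptilde hptilde ε hε hpb hpb' m1 m0 v1 v0 hm1meas hm0meas hm1 hm0 hv1 hv0
end

section
/- The variance-difference function vd(p₁,p₂) can be negative: there exist p₁, p₂ ∈ (0,1) with p₁ ≠ p₂ such that vd(p₁,p₂) = (p₁²-p₂²)/(p₁ p₂²) + ((1-p₁)²-(1-p₂)²)/((1-p₁)(1-p₂)²) < 0. For instance this holds for p₁ = 0.3 and some p₂ > p₁. -/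
/-- The normalized asymptotic variance difference under a globally misspecified constant
propensity score. -/
noncomputable def vd (p1 p2 : ℝ) : ℝ :=
  (p1 ^ 2 - p2 ^ 2) / (p1 * p2 ^ 2)
    + ((1 - p1) ^ 2 - (1 - p2) ^ 2) / ((1 - p1) * (1 - p2) ^ 2)

/-- **The variance-difference function `vd` can be negative**: there exist distinct
`p₁, p₂ ∈ (0,1)` with `vd(p₁,p₂) < 0`; in particular this holds for `p₁ = 0.3` and some
`p₂ > p₁`. -/
theorem vd_can_be_negative :
    (∃ p1 ∈ Set.Ioo (0:ℝ) 1, ∃ p2 ∈ Set.Ioo (0:ℝ) 1, p1 ≠ p2 ∧ vd p1 p2 < 0) ∧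
    (∃ p2 ∈ Set.Ioo (0:ℝ) 1, (0.3 : ℝ) < p2 ∧ vd 0.3 p2 < 0) := by
  have h : vd 0.3 0.4 < 0 := by unfold vd; norm_num
  exact ⟨⟨0.3, by norm_num, 0.4, by norm_num, by norm_num, h⟩,
    ⟨0.4, by norm_num, by norm_num, h⟩⟩
end
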